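/- For every n ≥ 1 and every integer k, the number of order ideals of cardinality k in the root poset of type B_n equals the number of Dyck paths of type B_n with area k; equivalently, Σ_{I ⊴ Φ⁺(B_n)} q^{|I|} = Σ_w q^{area(w)}, the right sum being over all Dyck paths w of type B_n. -/
import Mathlib


open scoped Classical

namespace Stmt

/-- Number of north steps (`true`) among the first `k` steps of the path `w`. -/
def countN {m : ℕ} (w : Fin m → Bool) (k : ℕ) : ℕ :=
  (Finset.univ.filter (fun t : Fin m => (t : ℕ) < k ∧ w t = true)).card

/-- Number of east steps (`false`) among the first `k` steps of the path `w`. -/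
def countE {m : ℕ} (w : Fin m → Bool) (k : ℕ) : ℕ :=
  (Finset.univ.filter (fun t : Fin m => (t : ℕ) < k ∧ w t = false)).card

/-- A Dyck path of length `n`: `n` north and `n` east steps, every prefix has
at least as many north as east steps. -/
def IsDyckA (n : ℕ) (w : Fin (2 * n) → Bool) : Prop :=
  countN w (2 * n) = n ∧ ∀ k : ℕ, countE w k ≤ countN w k

/-- A Dyck path of type `B_n`: `2n` steps, every prefix has at least as many
north as east steps. -/
def IsDyckB (n : ℕ) (w : Fin (2 * n) → Bool) : Prop :=
  ∀ k : ℕ, countE w k ≤ countN w k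

/-- The unit cell `[i-1,i] × [j-1,j]` lies below the lattice path `w`:
at some time the path has `x`-coordinate `< i` and `y`-coordinate `≥ j`. -/
def CellBelow {m : ℕ} (w : Fin m → Bool) (i j : ℕ) : Prop :=
  ∃ k : ℕ, countE w k < i ∧ j ≤ countN w k

/-- Area of a (type `A`) Dyck path: number of cells `b_{i,j}` with `i < j`
lying below the path. -/
noncomputable def areaA {m : ℕ} (w : Fin m → Bool) : ℕ :=
  {p : ℕ × ℕ | 1 ≤ p.1 ∧ p.1 < p.2 ∧ CellBelow w p.1 p.2}.ncard

/-- Area of a type `B_n` Dyck path: number of cells `b_{i,j}` with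
`1 ≤ i < j ≤ 2n+1-i` lying below the path. -/
noncomputable def areaB (n : ℕ) (w : Fin (2 * n) → Bool) : ℕ :=
  {p : ℕ × ℕ | 1 ≤ p.1 ∧ p.1 < p.2 ∧ p.2 ≤ 2 * n + 1 - p.1 ∧
    CellBelow w p.1 p.2}.ncard

/-- Descent set of a path, 1-indexed: positions `i` with `w_i = E`, `w_{i+1} = N`. -/
def pathDes {m : ℕ} (w : Fin m → Bool) : Finset ℕ :=
  (Finset.Ioo 0 m).filter (fun i =>
    ∃ h : i < m, w ⟨i - 1, Nat.lt_of_le_of_lt (Nat.sub_le i 1) h⟩ = false ∧ w ⟨i, h⟩ = true)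

def desPath {m : ℕ} (w : Fin m → Bool) : ℕ := (pathDes w).card

/-- Major index of a Dyck path of length `n`: `maj(w) = ∑_{i ∈ Des(w)} (2n - i)`. -/
def majA (n : ℕ) (w : Fin (2 * n) → Bool) : ℕ :=
  ∑ i ∈ pathDes w, (2 * n - i)

/-- Number of east steps of a path. -/
def negPath {m : ℕ} (w : Fin m → Bool) : ℕ :=
  (Finset.univ.filter (fun t : Fin m => w t = false)).card

/-- Type `B` major index: `maj(w) = 2 ⬝ (neg(w) + ∑_{i ∈ Des(w)} (2n - i))`. -/
def majB (n : ℕ) (w : Fin (2 * n) → Bool) : ℕ :=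
  2 * (negPath w + ∑ i ∈ pathDes w, (2 * n - i))

/-- The standard basis vector `e_i` of `ℝ^n` (with integer coordinates). -/
def eB (n : ℕ) (i : Fin n) : Fin n → ℤ := Pi.single i 1

/-- The positive roots of type `B_n`:
`{e_i} ∪ {e_i - e_j : j < i} ∪ {e_i + e_j : j < i}`. -/
def PosRootsB (n : ℕ) : Set (Fin n → ℤ) :=
  {v | (∃ i : Fin n, v = eB n i) ∨
       (∃ i j : Fin n, j < i ∧ v = eB n i - eB n j) ∨
       (∃ i j : Fin n, j < i ∧ v = eB n i + eB n j)}

/-- The simple roots of type `B_n`: `e_1` and `e_{i+1} - e_i` for `1 ≤ i ≤ n-1`. -/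
def SimpleRootsB (n : ℕ) : Set (Fin n → ℤ) :=
  {v | (∃ h : 0 < n, v = eB n ⟨0, h⟩) ∨
       (∃ i j : Fin n, (i : ℕ) + 1 = (j : ℕ) ∧ v = eB n j - eB n i)}

/-- Covering relation of the root poset: `α ⋖ β` iff `β - α` is a simple root. -/
def covB (n : ℕ) (a b : Fin n → ℤ) : Prop :=
  a ∈ PosRootsB n ∧ b ∈ PosRootsB n ∧ (b - a) ∈ SimpleRootsB n

/-- The root poset order of type `B_n`, generated by the covering relation. -/
def leB (n : ℕ) : (Fin n → ℤ) → (Fin n → ℤ) → Prop :=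
  Relation.ReflTransGen (covB n)

/-- `I` is an order ideal in the root poset of type `B_n`. -/
def IsIdealB (n : ℕ) (I : Set (Fin n → ℤ)) : Prop :=
  I ⊆ PosRootsB n ∧ ∀ a ∈ I, ∀ b ∈ PosRootsB n, leB n b a → b ∈ I

-- path basics

lemma countE_mono {m : ℕ} (w : Fin m → Bool) {k k' : ℕ} (h : k ≤ k') :
    countE w k ≤ countE w k' := by
  apply Finset.card_le_card
  intro t ht
  simp only [Finset.mem_filter, Finset.mem_univ, true_and] at ht ⊢
  exact ⟨lt_of_lt_of_le ht.1 h, ht.2⟩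

lemma countN_mono {m : ℕ} (w : Fin m → Bool) {k k' : ℕ} (h : k ≤ k') :
    countN w k ≤ countN w k' := by
  apply Finset.card_le_card
  intro t ht
  simp only [Finset.mem_filter, Finset.mem_univ, true_and] at ht ⊢
  exact ⟨lt_of_lt_of_le ht.1 h, ht.2⟩

lemma card_filter_succ {m k : ℕ} (P : Fin m → Prop) [DecidablePred P] :
    (Finset.univ.filter fun t : Fin m => (t : ℕ) < k + 1 ∧ P t).card =
    (Finset.univ.filter fun t : Fin m => (t : ℕ) < k ∧ P t).card +
      (if h : k < m then (if P ⟨k, h⟩ then 1 else 0) else 0) := by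
  classical
  by_cases hk : k < m
  · rw [dif_pos hk]
    by_cases hP : P ⟨k, hk⟩
    · rw [if_pos hP]
      have : (Finset.univ.filter fun t : Fin m => (t : ℕ) < k + 1 ∧ P t) =
          insert ⟨k, hk⟩ (Finset.univ.filter fun t : Fin m => (t : ℕ) < k ∧ P t) := by
        ext t
        simp only [Finset.mem_insert, Finset.mem_filter, Finset.mem_univ, true_and]
        constructor
        · rintro ⟨h1, h2⟩
          rcases Nat.lt_succ_iff_lt_or_eq.mp h1 with h | h
          · exact Or.inr ⟨h, h2⟩
          · exact Or.inl (Fin.ext h)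
        · rintro (rfl | ⟨h1, h2⟩)
          · exact ⟨Nat.lt_succ_self _, hP⟩
          · exact ⟨Nat.lt_succ_of_lt h1, h2⟩
      rw [this, Finset.card_insert_of_notMem (by simp)]

    · rw [if_neg hP, add_zero]
      congr 1
      ext t
      simp only [Finset.mem_filter, Finset.mem_univ, true_and]
      constructor
      · rintro ⟨h1, h2⟩
        rcases Nat.lt_succ_iff_lt_or_eq.mp h1 with h | h
        · exact ⟨h, h2⟩
        · exact absurd h2 (by rw [show t = (⟨k, hk⟩ : Fin m) from Fin.ext h]; exact hP)
      · rintro ⟨h1, h2⟩; exact ⟨Nat.lt_succ_of_lt h1, h2⟩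
  · rw [dif_neg hk, add_zero]
    congr 1
    ext t
    simp only [Finset.mem_filter, Finset.mem_univ, true_and]
    have := t.isLt
    constructor
    · rintro ⟨h1, h2⟩; exact ⟨by omega, h2⟩
    · rintro ⟨h1, h2⟩; exact ⟨by omega, h2⟩

lemma card_filter_lt (m k : ℕ) :
    (Finset.univ.filter fun t : Fin m => (t : ℕ) < k).card = min k m := by
  classical
  induction k with
  | zero => simp
  | succ k ih =>
    have h := card_filter_succ (m := m) (k := k) (fun _ : Fin m => True)
    simp only [and_true] at h
    rw [h, ih]
    by_cases hk : k < m
    · rw [dif_pos hk]; simp; omega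
    · rw [dif_neg hk]; omega

lemma countN_add_countE {m : ℕ} (w : Fin m → Bool) (k : ℕ) :
    countN w k + countE w k = min k m := by
  classical
  rw [countN, countE, ← card_filter_lt m k, ← Finset.card_union_of_disjoint]
  · congr 1
    ext t
    simp only [Finset.mem_union, Finset.mem_filter, Finset.mem_univ, true_and]
    rcases Bool.eq_false_or_eq_true (w t) with h | h <;> simp [h] <;> tauto
  · rw [Finset.disjoint_left]
    intro t ht ht'
    simp only [Finset.mem_filter] at ht ht'
    rw [ht.2.2] at ht'
    exact absurd ht'.2.2 (by simp)

lemma countE_succ {m : ℕ} (w : Fin m → Bool) (k : ℕ) :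
    countE w (k + 1) = countE w k +
      (if h : k < m then (if w ⟨k, h⟩ = false then 1 else 0) else 0) :=
  card_filter_succ _

lemma countE_zero {m : ℕ} (w : Fin m → Bool) : countE w 0 = 0 := by
  simp [countE]

lemma countE_congr {m : ℕ} {w w' : Fin m → Bool} {k : ℕ}
    (h : ∀ t : Fin m, (t : ℕ) < k → w t = w' t) : countE w k = countE w' k := by
  unfold countE
  congr 1
  ext t
  simp only [Finset.mem_filter, Finset.mem_univ, true_and]
  constructor
  · rintro ⟨h1, h2⟩; exact ⟨h1, (h t h1) ▸ h2⟩
  · rintro ⟨h1, h2⟩; exact ⟨h1, (h t h1) ▸ h2⟩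

-- region
def Reg (n : ℕ) (p : ℕ × ℕ) : Prop := 1 ≤ p.1 ∧ p.1 < p.2 ∧ p.1 + p.2 ≤ 2 * n + 1

lemma cellBelow_iff {n : ℕ} (w : Fin (2 * n) → Bool) {i j : ℕ} (hr : Reg n (i, j)) :
    CellBelow w i j ↔ countE w (i + j - 1) < i := by
  obtain ⟨h1, h2, h3⟩ := hr
  simp only at h1 h2 h3
  have hk2n : i + j - 1 ≤ 2 * n := by omega
  constructor
  · rintro ⟨k, hE, hN⟩
    by_cases hk : i + j - 1 ≤ k
    · exact lt_of_le_of_lt (countE_mono w hk) hE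
    · have hs := countN_add_countE w (i + j - 1)
      have hmono := countN_mono w (show k ≤ i + j - 1 by omega)
      omega
  · intro h
    refine ⟨i + j - 1, h, ?_⟩
    have hs := countN_add_countE w (i + j - 1)
    omega


lemma countE_of_ge {m : ℕ} (w : Fin m → Bool) {k : ℕ} (h : m ≤ k) :
    countE w k = countE w m := by
  unfold countE
  congr 1
  ext t
  simp only [Finset.mem_filter, Finset.mem_univ, true_and]
  have := t.isLt
  constructor
  · rintro ⟨_, h2⟩; exact ⟨by omega, h2⟩
  · rintro ⟨_, h2⟩; exact ⟨by omega, h2⟩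

lemma dyck_two_mul {n : ℕ} {w : Fin (2 * n) → Bool} (hw : IsDyckB n w) (k : ℕ) :
    2 * countE w k ≤ min k (2 * n) := by
  have h := countN_add_countE w k
  have := hw k
  omega

lemma isDyckB_of {n : ℕ} (w : Fin (2 * n) → Bool)
    (h : ∀ k, k ≤ 2 * n → 2 * countE w k ≤ k) : IsDyckB n w := by
  intro k
  by_cases hk : k ≤ 2 * n
  · have hs := countN_add_countE w k
    have := h k hk
    omega
  · have h1 : countE w k = countE w (2 * n) := countE_of_ge w (by omega)
    have hs := countN_add_countE w k
    have hs2 := countN_add_countE w (2 * n)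
    have := h (2 * n) le_rfl
    omega

lemma key_ne {n : ℕ} {w w' : Fin (2 * n) → Bool} (hw : IsDyckB n w) {t0 : ℕ}
    (ht0 : t0 < 2 * n) (hE : countE w t0 = countE w' t0)
    (hf : w ⟨t0, ht0⟩ = false) (ht : w' ⟨t0, ht0⟩ = true)
    (hc : ∀ p : ℕ × ℕ, Reg n p → (CellBelow w p.1 p.2 ↔ CellBelow w' p.1 p.2)) :
    False := by
  set x := countE w t0 with hx
  have hE1 : countE w (t0 + 1) = x + 1 := by
    rw [countE_succ, dif_pos ht0, if_pos hf]
  have hE1' : countE w' (t0 + 1) = x := by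
    rw [countE_succ, dif_pos ht0, if_neg (by simp [ht])]
    omega
  have hd := dyck_two_mul hw (t0 + 1)
  rw [hE1] at hd
  have hreg : Reg n (x + 1, t0 + 1 - x) := by
    refine ⟨by omega, by simp; omega, by simp; omega⟩
  have heq : (x + 1) + (t0 + 1 - x) - 1 = t0 + 1 := by omega
  have h1 := cellBelow_iff w hreg
  have h2 := cellBelow_iff w' hreg
  rw [heq] at h1 h2
  have h3 := hc (x + 1, t0 + 1 - x) hreg
  simp only at h3
  rw [h1, h2] at h3
  omega

lemma cells_inj {n : ℕ} {w w' : Fin (2 * n) → Bool} (hw : IsDyckB n w)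
    (hw' : IsDyckB n w')
    (hc : ∀ p : ℕ × ℕ, Reg n p → (CellBelow w p.1 p.2 ↔ CellBelow w' p.1 p.2)) :
    w = w' := by
  classical
  by_contra hne
  have hex : ∃ t : ℕ, ∃ h : t < 2 * n, w ⟨t, h⟩ ≠ w' ⟨t, h⟩ := by
    rcases Function.ne_iff.mp hne with ⟨t, htne⟩
    exact ⟨t, t.isLt, by simpa [Fin.eta] using htne⟩
  set t0 := Nat.find hex with ht0def
  obtain ⟨ht0, hne0⟩ := Nat.find_spec hex
  have hagree : ∀ s : Fin (2 * n), (s : ℕ) < t0 → w s = w' s := by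
    intro s hs
    by_contra hss
    exact Nat.find_min hex hs ⟨s.isLt, by simpa [Fin.eta] using hss⟩
  have hEeq : countE w t0 = countE w' t0 := countE_congr hagree
  cases hb : w ⟨t0, ht0⟩ with
  | false =>
    cases hb' : w' ⟨t0, ht0⟩ with
    | false => exact hne0 (hb.trans hb'.symm)
    | true => exact key_ne hw ht0 hEeq hb hb' hc
  | true =>
    cases hb' : w' ⟨t0, ht0⟩ with
    | false =>
      exact key_ne hw' ht0 hEeq.symm hb' hb (fun p hp => (hc p hp).symm)
    | true => exact hne0 (hb.trans hb'.symm)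


def Down (n : ℕ) (S : Set (ℕ × ℕ)) : Prop :=
  (∀ p ∈ S, Reg n p) ∧
  ∀ p q : ℕ × ℕ, Reg n p → q ∈ S → q.1 ≤ p.1 → p.2 ≤ q.2 → p ∈ S

noncomputable def notS (S : Set (ℕ × ℕ)) (k : ℕ) : Finset ℕ :=
  (Finset.Icc 1 (k / 2)).filter fun i => (i, k + 1 - i) ∉ S

noncomputable def Estar (S : Set (ℕ × ℕ)) (k : ℕ) : ℕ := (notS S k).sup id

noncomputable def Psi (n : ℕ) (S : Set (ℕ × ℕ)) : Fin (2 * n) → Bool :=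
  fun t => if Estar S ((t : ℕ) + 1) = Estar S (t : ℕ) then true else false

lemma mem_notS {S : Set (ℕ × ℕ)} {k i : ℕ} :
    i ∈ notS S k ↔ 1 ≤ i ∧ i ≤ k / 2 ∧ (i, k + 1 - i) ∉ S := by
  simp [notS, Finset.mem_Icc, and_assoc]

lemma reg_diag {n k i : ℕ} (hk : k ≤ 2 * n) (h1 : 1 ≤ i) (h2 : i ≤ k / 2) :
    Reg n (i, k + 1 - i) := by
  refine ⟨h1, ?_, ?_⟩ <;> simp <;> omega

lemma notS_seg {n : ℕ} {S : Set (ℕ × ℕ)} (hS : Down n S) {k i i' : ℕ}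
    (hk : k ≤ 2 * n) (hi : i ∈ notS S k) (h1 : 1 ≤ i') (h2 : i' ≤ i) :
    i' ∈ notS S k := by
  rw [mem_notS] at hi ⊢
  obtain ⟨hi1, hi2, hi3⟩ := hi
  refine ⟨h1, by omega, ?_⟩
  intro hmem
  exact hi3 (hS.2 (i, k + 1 - i) (i', k + 1 - i') (reg_diag hk hi1 hi2) hmem
    (by simp; omega) (by simp; omega))

lemma Estar_le_half (S : Set (ℕ × ℕ)) (k : ℕ) : Estar S k ≤ k / 2 :=
  Finset.sup_le fun i hi => (mem_notS.mp hi).2.1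

lemma mem_of_le_Estar {n : ℕ} {S : Set (ℕ × ℕ)} (hS : Down n S) {k i : ℕ}
    (hk : k ≤ 2 * n) (h1 : 1 ≤ i) (h2 : i ≤ Estar S k) : i ∈ notS S k := by
  have hne : (notS S k).Nonempty := by
    rw [Finset.nonempty_iff_ne_empty]
    intro h
    rw [Estar, h, Finset.sup_empty] at h2
    simp at h2
    omega
  obtain ⟨b, hb, hsup⟩ := Finset.exists_mem_eq_sup (notS S k) hne id
  have hEb : Estar S k = b := hsup
  exact notS_seg hS hk hb h1 (by omega)

lemma Estar_lt_iff {n : ℕ} {S : Set (ℕ × ℕ)} (hS : Down n S) {k i : ℕ}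
    (hk : k ≤ 2 * n) (h1 : 1 ≤ i) (h2 : 2 * i ≤ k) :
    (i, k + 1 - i) ∈ S ↔ Estar S k < i := by
  constructor
  · intro hmem
    by_contra h
    exact (mem_notS.mp (mem_of_le_Estar hS hk h1 (by omega))).2.2 hmem
  · intro h
    by_contra hmem
    have hm : i ∈ notS S k := mem_notS.mpr ⟨h1, by omega, hmem⟩
    have h3 : i ≤ Estar S k := Finset.le_sup (f := id) hm
    omega

lemma Estar_zero (S : Set (ℕ × ℕ)) : Estar S 0 = 0 := by
  simp [Estar, notS]

lemma Estar_succ_cases {n : ℕ} {S : Set (ℕ × ℕ)} (hS : Down n S) {k : ℕ}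
    (hk : k + 1 ≤ 2 * n) :
    Estar S (k + 1) = Estar S k ∨ Estar S (k + 1) = Estar S k + 1 := by
  have step_up : ∀ i ∈ notS S k, i ∈ notS S (k + 1) := by
    intro i hi
    rw [mem_notS] at hi ⊢
    obtain ⟨h1, h2, h3⟩ := hi
    refine ⟨h1, by omega, ?_⟩
    intro hmem
    exact h3 (hS.2 (i, k + 1 - i) (i, k + 1 + 1 - i) (reg_diag (by omega) h1 h2)
      hmem le_rfl (by simp; omega))
  have lower : Estar S k ≤ Estar S (k + 1) := by
    rcases Nat.eq_zero_or_pos (Estar S k) with h | h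
    · omega
    · have hm : Estar S k ∈ notS S k := mem_of_le_Estar hS (by omega) h le_rfl
      exact Finset.le_sup (f := id) (step_up _ hm)
  have upper : Estar S (k + 1) ≤ Estar S k + 1 := by
    by_contra hcon
    push_neg at hcon
    set e' := Estar S (k + 1) with he'def
    have he' : e' ∈ notS S (k + 1) := mem_of_le_Estar hS hk (by omega) le_rfl
    rw [mem_notS] at he'
    obtain ⟨he1, he2, he3⟩ := he'
    have h1 : e' - 1 ∉ notS S k := by
      intro hmem
      have hle : e' - 1 ≤ Estar S k := Finset.le_sup (f := id) hmem
      omega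
    have h2 : (e' - 1, k + 1 - (e' - 1)) ∈ S := by
      by_contra hmem
      exact h1 (mem_notS.mpr ⟨by omega, by omega, hmem⟩)
    have heq : k + 1 - (e' - 1) = k + 1 + 1 - e' := by omega
    rw [heq] at h2
    refine he3 (hS.2 (e', k + 1 + 1 - e') (e' - 1, k + 1 + 1 - e') ?_ h2
      (by omega) le_rfl)
    refine ⟨by omega, by omega, by omega⟩
  omega

lemma countE_Psi {n : ℕ} {S : Set (ℕ × ℕ)} (hS : Down n S) :
    ∀ k, k ≤ 2 * n → countE (Psi n S) k = Estar S k := by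
  intro k
  induction k with
  | zero => intro _; rw [countE_zero, Estar_zero]
  | succ k ih =>
    intro hk
    have hk' : k < 2 * n := by omega
    rw [countE_succ, dif_pos hk', ih (by omega)]
    have hval : Psi n S ⟨k, hk'⟩ = if Estar S (k + 1) = Estar S k then true else false := rfl
    rcases Estar_succ_cases hS hk with h | h
    · rw [hval, if_pos h]
      simp [h]
    · have hne2 : ¬ (Estar S (k + 1) = Estar S k) := by omega
      rw [hval, if_neg hne2]
      simp [h]

lemma dyck_Psi {n : ℕ} {S : Set (ℕ × ℕ)} (hS : Down n S) : IsDyckB n (Psi n S) := by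
  apply isDyckB_of
  intro k hk
  rw [countE_Psi hS k hk]
  have := Estar_le_half S k
  omega

lemma cells_Psi {n : ℕ} {S : Set (ℕ × ℕ)} (hS : Down n S) {p : ℕ × ℕ}
    (hreg : Reg n p) : CellBelow (Psi n S) p.1 p.2 ↔ p ∈ S := by
  obtain ⟨i, j⟩ := p
  obtain ⟨h1, h2, h3⟩ := hreg
  simp only at h1 h2 h3
  rw [cellBelow_iff _ ⟨h1, h2, h3⟩, countE_Psi hS _ (by omega)]
  have hj : (i + j - 1) + 1 - i = j := by omega
  have := Estar_lt_iff (S := S) hS (k := i + j - 1) (i := i) (by omega) h1 (by omega)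
  rw [hj] at this
  simp only [this]


-- invariants
noncomputable def Hf {n : ℕ} (v : Fin n → ℤ) : ℤ := ∑ s : Fin n, (((s : ℕ) : ℤ) + 1) * v s

noncomputable def Tf {n : ℕ} (v : Fin n → ℤ) : ℕ :=
  (Finset.univ.filter fun s => v s ≠ 0).sup Fin.val

lemma eB_apply {n : ℕ} (p s : Fin n) : eB n p s = if s = p then 1 else 0 := by
  rw [eB, Pi.single_apply]

lemma Hf_eB {n : ℕ} (p : Fin n) : Hf (eB n p) = ((p : ℕ) : ℤ) + 1 := by
  simp [Hf, eB_apply, mul_ite]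

lemma Hf_add {n : ℕ} (v u : Fin n → ℤ) : Hf (v + u) = Hf v + Hf u := by
  simp [Hf, mul_add, Finset.sum_add_distrib]

lemma Hf_sub {n : ℕ} (v u : Fin n → ℤ) : Hf (v - u) = Hf v - Hf u := by
  simp [Hf, mul_sub, Finset.sum_sub_distrib]

lemma Tf_le_of_ne {n : ℕ} {v : Fin n → ℤ} {s : Fin n} (h : v s ≠ 0) :
    (s : ℕ) ≤ Tf v :=
  Finset.le_sup (by simp [h])

lemma Tf_eB {n : ℕ} (p : Fin n) : Tf (eB n p) = (p : ℕ) := by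
  have : (Finset.univ.filter fun s => eB n p s ≠ 0) = {p} := by
    ext s
    by_cases h : s = p <;> simp [eB_apply, h]
  rw [Tf, this]
  simp

lemma Tf_pair_sub {n : ℕ} {p q : Fin n} (h : q < p) : Tf (eB n p - eB n q) = (p : ℕ) := by
  have hne : q ≠ p := ne_of_lt h
  have : (Finset.univ.filter fun s => (eB n p - eB n q) s ≠ 0) = {p, q} := by
    ext s
    by_cases h1 : s = p <;> by_cases h2 : s = q <;>
      simp_all [eB_apply, Pi.sub_apply]
  rw [Tf, this]
  simp [Finset.sup_insert]
  omega

lemma Tf_pair_add {n : ℕ} {p q : Fin n} (h : q < p) : Tf (eB n p + eB n q) = (p : ℕ) := by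
  have hne : q ≠ p := ne_of_lt h
  have : (Finset.univ.filter fun s => (eB n p + eB n q) s ≠ 0) = {p, q} := by
    ext s
    by_cases h1 : s = p <;> by_cases h2 : s = q <;>
      simp_all [eB_apply, Pi.add_apply]
  rw [Tf, this]
  simp [Finset.sup_insert]
  omega

lemma root_spec {n : ℕ} {v : Fin n → ℤ} (hv : v ∈ PosRootsB n) :
    ∃ p : Fin n, (p : ℕ) = Tf v ∧ v p = 1 ∧ (∀ s : Fin n, (p : ℕ) < (s : ℕ) → v s = 0) ∧
      (∀ s, v s ≤ 1) ∧
      (∀ x y z : Fin n, x ≠ y → x ≠ z → y ≠ z → v x = 0 ∨ v y = 0 ∨ v z = 0) := by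
  rcases hv with ⟨p, rfl⟩ | ⟨p, q, hq, rfl⟩ | ⟨p, q, hq, rfl⟩
  · refine ⟨p, (Tf_eB p).symm, by simp [eB_apply], ?_, ?_, ?_⟩
    · intro s hs
      have : s ≠ p := by intro h; subst h; omega
      simp [eB_apply, this]
    · intro s; by_cases h : s = p <;> simp [eB_apply, h]
    · intro x y z hxy hxz hyz
      by_cases hx : x = p
      · subst hx
        right; left
        simp [eB_apply, Ne.symm hxy]
      · left; simp [eB_apply, hx]
  · have hne : q ≠ p := ne_of_lt hq
    refine ⟨p, (Tf_pair_sub hq).symm, by simp [eB_apply, Ne.symm hne], ?_, ?_, ?_⟩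
    · intro s hs
      have h1 : s ≠ p := by intro h; subst h; omega
      have h2 : s ≠ q := by
        intro h; subst h
        have h3 : (s : ℕ) < (p : ℕ) := hq
        omega
      simp [eB_apply, h1, h2]
    · intro s
      by_cases h1 : s = p <;> by_cases h2 : s = q <;> simp_all [eB_apply]
    · intro x y z hxy hxz hyz
      by_cases hx1 : x = p
      · by_cases hy2 : y = q
        · subst hx1; subst hy2
          right; right
          simp [eB_apply, Ne.symm hxz, Ne.symm hyz]
        · subst hx1
          right; left
          simp [eB_apply, Ne.symm hxy, hy2]
      · by_cases hx2 : x = q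
        · subst hx2
          by_cases hy1 : y = p
          · subst hy1
            right; right
            simp [eB_apply, Ne.symm hxz, Ne.symm hyz]
          · right; left
            simp [eB_apply, hy1, Ne.symm hxy]
        · left; simp [eB_apply, hx1, hx2]
  · have hne : q ≠ p := ne_of_lt hq
    refine ⟨p, (Tf_pair_add hq).symm, by simp [eB_apply, Ne.symm hne], ?_, ?_, ?_⟩
    · intro s hs
      have h1 : s ≠ p := by intro h; subst h; omega
      have h2 : s ≠ q := by
        intro h; subst h
        have h3 : (s : ℕ) < (p : ℕ) := hq
        omega
      simp [eB_apply, h1, h2]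
    · intro s
      by_cases h1 : s = p <;> by_cases h2 : s = q <;> simp_all [eB_apply]
    · intro x y z hxy hxz hyz
      by_cases hx1 : x = p
      · by_cases hy2 : y = q
        · subst hx1; subst hy2
          right; right
          simp [eB_apply, Ne.symm hxz, Ne.symm hyz]
        · subst hx1
          right; left
          simp [eB_apply, Ne.symm hxy, hy2]
      · by_cases hx2 : x = q
        · subst hx2
          by_cases hy1 : y = p
          · subst hy1
            right; right
            simp [eB_apply, Ne.symm hxz, Ne.symm hyz]
          · right; left
            simp [eB_apply, hy1, Ne.symm hxy]
        · left; simp [eB_apply, hx1, hx2]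


lemma cov_TH {n : ℕ} {a b : Fin n → ℤ} (h : covB n a b) :
    Hf b = Hf a + 1 ∧ (Tf b = Tf a ∨ Tf b = Tf a + 1) := by
  obtain ⟨ha, hb, hs⟩ := h
  obtain ⟨pa, hpaT, hpa1, hpa0, hpale, hpa3⟩ := root_spec ha
  obtain ⟨pb, hpbT, hpb1, hpb0, hpble, hpb3⟩ := root_spec hb
  rcases hs with ⟨hpos, hsv⟩ | ⟨ii, jj, hij, hsv⟩
  · have hb_eq : b = a + eB n ⟨0, hpos⟩ := by rw [← hsv]; abel
    constructor
    · rw [hb_eq, Hf_add, Hf_eB]; norm_num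
    have hbev : ∀ s : Fin n, b s = a s + (if s = ⟨0, hpos⟩ then 1 else 0) := by
      intro s; rw [hb_eq]; simp [eB_apply]
    by_cases hpa0v : (pa : ℕ) = 0
    · exfalso
      have h2 := hbev pa
      rw [if_pos (Fin.ext hpa0v), hpa1] at h2
      have h3 := hpble pa
      omega
    · have h1 : (pb : ℕ) ≤ (pa : ℕ) := by
        by_contra hcon
        push_neg at hcon
        have h2 := hbev pb
        have hne : pb ≠ ⟨0, hpos⟩ := by
          intro hh
          rw [hh] at hcon
          simp at hcon
        rw [hpa0 pb hcon, if_neg hne, hpb1] at h2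
        omega
      have h2 : (pa : ℕ) ≤ (pb : ℕ) := by
        by_contra hcon
        push_neg at hcon
        have h3 := hbev pa
        have hne : pa ≠ ⟨0, hpos⟩ := by
          intro hh
          exact hpa0v (by rw [hh])
        rw [hpb0 pa hcon, hpa1, if_neg hne] at h3
        omega
      left; omega
  · have hb_eq : b = a + (eB n jj - eB n ii) := by rw [← hsv]; abel
    have hiijj : (ii : ℕ) < (jj : ℕ) := by omega
    have hij_ne : jj ≠ ii := Fin.ne_of_val_ne (by omega)
    constructor
    · rw [hb_eq, Hf_add, Hf_sub, Hf_eB, Hf_eB]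
      have hc : ((jj : ℕ) : ℤ) = ((ii : ℕ) : ℤ) + 1 := by exact_mod_cast hij.symm
      omega
    have hbev : ∀ s : Fin n,
        b s = a s + (if s = jj then 1 else 0) - (if s = ii then 1 else 0) := by
      intro s
      rw [hb_eq]
      simp [eB_apply, Pi.add_apply, Pi.sub_apply]
      ring
    rcases lt_trichotomy (pa : ℕ) (ii : ℕ) with hlt | heq | hgt
    · exfalso
      have hbii : b ii = -1 := by
        have h2 := hbev ii
        rw [hpa0 ii hlt, if_neg (Ne.symm hij_ne), if_pos rfl] at h2
        omega
      have hbjj : b jj = 1 := by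
        have h2 := hbev jj
        rw [hpa0 jj (by omega), if_pos rfl, if_neg hij_ne] at h2
        omega
      have hbpa : b pa = 1 := by
        have h2 := hbev pa
        rw [hpa1, if_neg (Fin.ne_of_val_ne (by omega)),
          if_neg (Fin.ne_of_val_ne (by omega))] at h2
        omega
      rcases hpb3 pa ii jj (Fin.ne_of_val_ne (by omega)) (Fin.ne_of_val_ne (by omega))
        (Fin.ne_of_val_ne (by omega)) with h | h | h <;> omega
    · right
      have hbjj : b jj = 1 := by
        have h2 := hbev jj
        rw [hpa0 jj (by omega), if_pos rfl, if_neg hij_ne] at h2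
        omega
      have hup : ∀ s : Fin n, (jj : ℕ) < (s : ℕ) → b s = 0 := by
        intro s hs
        have h2 := hbev s
        rw [hpa0 s (by omega), if_neg (Fin.ne_of_val_ne (by omega)),
          if_neg (Fin.ne_of_val_ne (by omega))] at h2
        omega
      have hb1 : (pb : ℕ) ≤ (jj : ℕ) := by
        by_contra hcon
        push_neg at hcon
        have := hup pb hcon
        omega
      have hb2 : (jj : ℕ) ≤ Tf b := Tf_le_of_ne (by rw [hbjj]; norm_num)
      omega
    · by_cases hjjpa : (jj : ℕ) = (pa : ℕ)
      · exfalso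
        have h2 := hbev pa
        rw [hpa1, if_pos (Fin.ext hjjpa.symm), if_neg (Fin.ne_of_val_ne (by omega))] at h2
        have := hpble pa
        omega
      · left
        have hjlt : (jj : ℕ) < (pa : ℕ) := by omega
        have hbpa : b pa = 1 := by
          have h2 := hbev pa
          rw [hpa1, if_neg (Fin.ne_of_val_ne (by omega)),
            if_neg (Fin.ne_of_val_ne (by omega))] at h2
          omega
        have hup : ∀ s : Fin n, (pa : ℕ) < (s : ℕ) → b s = 0 := by
          intro s hs
          have h2 := hbev s
          rw [hpa0 s (by omega), if_neg (Fin.ne_of_val_ne (by omega)),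
            if_neg (Fin.ne_of_val_ne (by omega))] at h2
          omega
        have hb1 : (pb : ℕ) ≤ (pa : ℕ) := by
          by_contra hcon
          push_neg at hcon
          have := hup pb hcon
          omega
        have hb2 : (pa : ℕ) ≤ Tf b := Tf_le_of_ne (by rw [hbpa]; norm_num)
        omega

lemma leB_TH {n : ℕ} {a b : Fin n → ℤ} (h : leB n a b) :
    Tf a ≤ Tf b ∧ (Tf b : ℤ) - Hf b ≤ (Tf a : ℤ) - Hf a := by
  induction h with
  | refl => exact ⟨le_rfl, le_rfl⟩
  | tail hxy hyz ih =>
    obtain ⟨hH, hT⟩ := cov_TH hyz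
    rcases hT with h1 | h1 <;>
      constructor <;> [skip; skip; skip; skip]
    all_goals omega


def E' (n : ℕ) (t : ℕ) : Fin n → ℤ := fun s => if (s : ℕ) = t then 1 else 0

def tau (n : ℕ) (j : ℕ) : Fin n → ℤ :=
  if j ≤ n then -(E' n (n - j)) else if j = n + 1 then 0 else E' n (j - n - 2)

def rho (n : ℕ) (p : ℕ × ℕ) : Fin n → ℤ := E' n (n - p.1) + tau n p.2

lemma E'_eq_eB {n t : ℕ} (h : t < n) : E' n t = eB n ⟨t, h⟩ := by
  funext s
  simp only [E', eB_apply]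
  by_cases hc : (s : ℕ) = t <;> simp [hc, Fin.ext_iff]

lemma rho_cases {n : ℕ} {p : ℕ × ℕ} (hr : Reg n p) :
    (p.2 ≤ n ∧ ∃ P Q : Fin n, (P : ℕ) = n - p.1 ∧ (Q : ℕ) = n - p.2 ∧ Q < P ∧
      rho n p = eB n P - eB n Q) ∨
    (p.2 = n + 1 ∧ ∃ P : Fin n, (P : ℕ) = n - p.1 ∧ rho n p = eB n P) ∨
    (n + 2 ≤ p.2 ∧ ∃ P Q : Fin n, (P : ℕ) = n - p.1 ∧ (Q : ℕ) = p.2 - n - 2 ∧ Q < P ∧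
      rho n p = eB n P + eB n Q) := by
  obtain ⟨i, j⟩ := p
  obtain ⟨h1, h2, h3⟩ := hr
  simp only at h1 h2 h3 ⊢
  have hin : i ≤ n := by omega
  by_cases hj : j ≤ n
  · left
    refine ⟨hj, ⟨n - i, by omega⟩, ⟨n - j, by omega⟩, rfl, rfl, by simp [Fin.lt_def]; omega, ?_⟩
    rw [rho, tau]
    simp only [if_pos hj]
    rw [E'_eq_eB (show n - i < n by omega), E'_eq_eB (show n - j < n by omega)]
    abel
  · by_cases hj2 : j = n + 1
    · right; left
      refine ⟨hj2, ⟨n - i, by omega⟩, rfl, ?_⟩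
      rw [rho, tau]
      simp only [hj2, if_neg (by omega : ¬ n + 1 ≤ n), if_pos rfl, add_zero]
      rw [E'_eq_eB (show n - i < n by omega)]
      simp
    · right; right
      refine ⟨by omega, ⟨n - i, by omega⟩, ⟨j - n - 2, by omega⟩, rfl, rfl,
        by simp [Fin.lt_def]; omega, ?_⟩
      rw [rho, tau]
      simp only [if_neg hj, if_neg hj2]
      rw [E'_eq_eB (show n - i < n by omega), E'_eq_eB (show j - n - 2 < n by omega)]

lemma rho_mem {n : ℕ} {p : ℕ × ℕ} (hr : Reg n p) : rho n p ∈ PosRootsB n := by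
  rcases rho_cases hr with ⟨_, P, Q, _, _, hlt, heq⟩ | ⟨_, P, _, heq⟩ |
    ⟨_, P, Q, _, _, hlt, heq⟩
  · exact Or.inr (Or.inl ⟨P, Q, hlt, heq⟩)
  · exact Or.inl ⟨P, heq⟩
  · exact Or.inr (Or.inr ⟨P, Q, hlt, heq⟩)

lemma rho_T {n : ℕ} {p : ℕ × ℕ} (hr : Reg n p) : Tf (rho n p) = n - p.1 := by
  rcases rho_cases hr with ⟨_, P, Q, hP, _, hlt, heq⟩ | ⟨_, P, hP, heq⟩ |
    ⟨_, P, Q, hP, _, hlt, heq⟩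
  · rw [heq, Tf_pair_sub hlt, hP]
  · rw [heq, Tf_eB, hP]
  · rw [heq, Tf_pair_add hlt, hP]

lemma rho_H {n : ℕ} {p : ℕ × ℕ} (hr : Reg n p) :
    Hf (rho n p) = (p.2 : ℤ) - (p.1 : ℤ) := by
  have hreg := hr
  obtain ⟨h1, h2, h3⟩ := hreg
  have hin : p.1 ≤ n := by omega
  rcases rho_cases hr with ⟨hj, P, Q, hP, hQ, hlt, heq⟩ | ⟨hj, P, hP, heq⟩ |
    ⟨hj, P, Q, hP, hQ, hlt, heq⟩
  · rw [heq, Hf_sub, Hf_eB, Hf_eB, hP, hQ]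
    omega
  · rw [heq, Hf_eB, hP]
    omega
  · rw [heq, Hf_add, Hf_eB, Hf_eB, hP, hQ]
    omega

lemma rho_inj {n : ℕ} {p q : ℕ × ℕ} (hp : Reg n p) (hq : Reg n q)
    (h : rho n p = rho n q) : p = q := by
  have hT : Tf (rho n p) = Tf (rho n q) := by rw [h]
  have hH : Hf (rho n p) = Hf (rho n q) := by rw [h]
  rw [rho_T hp, rho_T hq] at hT
  rw [rho_H hp, rho_H hq] at hH
  obtain ⟨h1, h2, h3⟩ := hp
  obtain ⟨h4, h5, h6⟩ := hq
  have e1 : p.1 = q.1 := by omega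
  have e2 : p.2 = q.2 := by omega
  exact Prod.ext e1 e2

lemma rho_surj {n : ℕ} {v : Fin n → ℤ} (hv : v ∈ PosRootsB n) :
    ∃ p : ℕ × ℕ, Reg n p ∧ rho n p = v := by
  rcases hv with ⟨P, rfl⟩ | ⟨P, Q, hlt, rfl⟩ | ⟨P, Q, hlt, rfl⟩
  · have hP := P.isLt
    refine ⟨(n - (P : ℕ), n + 1), ⟨by omega, by omega, by omega⟩, ?_⟩
    rw [rho, tau]
    simp only [if_neg (by omega : ¬ n + 1 ≤ n), if_pos rfl, add_zero]
    have e : n - (n - (P : ℕ)) = (P : ℕ) := by omega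
    rw [e, E'_eq_eB P.isLt]
    simp
  · have hP := P.isLt
    have hQ := Q.isLt
    have hlt' : (Q : ℕ) < (P : ℕ) := hlt
    refine ⟨(n - (P : ℕ), n - (Q : ℕ)), ⟨by omega, by omega, by omega⟩, ?_⟩
    rw [rho, tau]
    simp only [if_pos (show n - (Q : ℕ) ≤ n by omega)]
    have e1 : n - (n - (P : ℕ)) = (P : ℕ) := by omega
    have e2 : n - (n - (Q : ℕ)) = (Q : ℕ) := by omega
    rw [e1, e2, E'_eq_eB P.isLt, E'_eq_eB Q.isLt, ← sub_eq_add_neg]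
  · have hP := P.isLt
    have hQ := Q.isLt
    have hlt' : (Q : ℕ) < (P : ℕ) := hlt
    refine ⟨(n - (P : ℕ), n + 2 + (Q : ℕ)), ⟨by omega, by omega, by omega⟩, ?_⟩
    rw [rho, tau]
    simp only [if_neg (by omega : ¬ n + 2 + (Q : ℕ) ≤ n),
      if_neg (by omega : ¬ n + 2 + (Q : ℕ) = n + 1)]
    have e1 : n - (n - (P : ℕ)) = (P : ℕ) := by omega
    have e2 : n + 2 + (Q : ℕ) - n - 2 = (Q : ℕ) := by omega
    rw [e1, e2, E'_eq_eB P.isLt, E'_eq_eB Q.isLt]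

lemma cov_step_i {n i j : ℕ} (h1 : Reg n (i + 1, j)) (h2 : Reg n (i, j)) :
    covB n (rho n (i + 1, j)) (rho n (i, j)) := by
  obtain ⟨a1, a2, a3⟩ := h1
  obtain ⟨b1, b2, b3⟩ := h2
  simp only at a1 a2 a3 b1 b2 b3
  refine ⟨rho_mem ⟨a1, a2, a3⟩, rho_mem ⟨b1, b2, b3⟩, ?_⟩
  have hsub : rho n (i, j) - rho n (i + 1, j) = E' n (n - i) - E' n (n - (i + 1)) := by
    rw [rho, rho]
    abel
  rw [hsub]
  right
  refine ⟨⟨n - (i + 1), by omega⟩, ⟨n - i, by omega⟩, by simp; omega, ?_⟩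
  rw [E'_eq_eB (show n - i < n by omega), E'_eq_eB (show n - (i + 1) < n by omega)]

lemma cov_step_j {n i j : ℕ} (h1 : Reg n (i, j)) (h2 : Reg n (i, j + 1)) :
    covB n (rho n (i, j)) (rho n (i, j + 1)) := by
  obtain ⟨a1, a2, a3⟩ := h1
  obtain ⟨b1, b2, b3⟩ := h2
  simp only at a1 a2 a3 b1 b2 b3
  have hn : 1 ≤ n := by omega
  refine ⟨rho_mem ⟨a1, a2, a3⟩, rho_mem ⟨b1, b2, b3⟩, ?_⟩
  have hsub : rho n (i, j + 1) - rho n (i, j) = tau n (j + 1) - tau n j := by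
    rw [rho, rho]
    abel
  rw [hsub]
  by_cases hj1 : j + 1 ≤ n
  · right
    have e : tau n (j + 1) - tau n j = eB n ⟨n - j, by omega⟩ - eB n ⟨n - (j + 1), by omega⟩ := by
      rw [tau, tau, if_pos hj1, if_pos (by omega : j ≤ n)]
      rw [E'_eq_eB (show n - (j + 1) < n by omega), E'_eq_eB (show n - j < n by omega)]
      abel
    rw [e]
    exact ⟨⟨n - (j + 1), by omega⟩, ⟨n - j, by omega⟩, by simp; omega, rfl⟩
  · by_cases hj2 : j = n
    · left
      refine ⟨hn, ?_⟩
      rw [tau, tau, if_neg hj1, if_pos (by omega : j + 1 = n + 1),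
        if_pos (by omega : j ≤ n)]
      have e : n - j = 0 := by omega
      rw [e, E'_eq_eB hn]
      abel
    · by_cases hj3 : j = n + 1
      · left
        refine ⟨hn, ?_⟩
        rw [tau, tau, if_neg hj1, if_neg (by omega : ¬ j + 1 = n + 1),
          if_neg (by omega : ¬ j ≤ n), if_pos hj3]
        have e : j + 1 - n - 2 = 0 := by omega
        rw [e, E'_eq_eB hn]
        abel
      · right
        rw [tau, tau, if_neg hj1, if_neg (by omega : ¬ j + 1 = n + 1),
          if_neg (by omega : ¬ j ≤ n), if_neg hj3]
        refine ⟨⟨j - n - 2, by omega⟩, ⟨j + 1 - n - 2, by omega⟩, by simp; omega, ?_⟩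
        rw [E'_eq_eB (show j + 1 - n - 2 < n by omega),
          E'_eq_eB (show j - n - 2 < n by omega)]

lemma le_chain_i {n : ℕ} : ∀ (d : ℕ) {i j : ℕ}, Reg n (i + d, j) → Reg n (i, j) →
    leB n (rho n (i + d, j)) (rho n (i, j)) := by
  intro d
  induction d with
  | zero => intro i j _ _; exact Relation.ReflTransGen.refl
  | succ d ih =>
    intro i j hp hq
    obtain ⟨a1, a2, a3⟩ := hp
    obtain ⟨b1, b2, b3⟩ := hq
    simp only at a1 a2 a3 b1 b2 b3
    have hmid : Reg n (i + d, j) := ⟨by omega, by omega, by omega⟩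
    have hstep : covB n (rho n (i + d + 1, j)) (rho n (i + d, j)) :=
      cov_step_i ⟨a1, a2, a3⟩ hmid
    exact Relation.ReflTransGen.head hstep (ih hmid ⟨b1, b2, b3⟩)

lemma le_chain_j {n : ℕ} : ∀ (d : ℕ) {i j : ℕ}, Reg n (i, j) → Reg n (i, j + d) →
    leB n (rho n (i, j)) (rho n (i, j + d)) := by
  intro d
  induction d with
  | zero => intro i j _ _; exact Relation.ReflTransGen.refl
  | succ d ih =>
    intro i j hp hq
    obtain ⟨a1, a2, a3⟩ := hp
    obtain ⟨b1, b2, b3⟩ := hq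
    simp only at a1 a2 a3 b1 b2 b3
    have hmid : Reg n (i, j + d) := ⟨by omega, by omega, by omega⟩
    have hstep : covB n (rho n (i, j + d)) (rho n (i, j + d + 1)) :=
      cov_step_j hmid ⟨b1, b2, b3⟩
    exact Relation.ReflTransGen.tail (ih ⟨a1, a2, a3⟩ hmid) hstep

lemma le_of_cellLe {n : ℕ} {p q : ℕ × ℕ} (hp : Reg n p) (hq : Reg n q)
    (h1 : q.1 ≤ p.1) (h2 : p.2 ≤ q.2) : leB n (rho n p) (rho n q) := by
  obtain ⟨p1, p2⟩ := p
  obtain ⟨q1, q2⟩ := q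
  simp only at h1 h2
  obtain ⟨a1, a2, a3⟩ := hp
  obtain ⟨b1, b2, b3⟩ := hq
  simp only at a1 a2 a3 b1 b2 b3
  have hmid : Reg n (q1, p2) := ⟨by omega, by omega, by omega⟩
  have e1 : q1 + (p1 - q1) = p1 := by omega
  have e2 : p2 + (q2 - p2) = q2 := by omega
  have hA := le_chain_i (n := n) (p1 - q1) (i := q1) (j := p2)
    (by rw [e1]; exact ⟨a1, a2, a3⟩) hmid
  rw [e1] at hA
  have hB := le_chain_j (n := n) (q2 - p2) (i := q1) (j := p2) hmid
    (by rw [e2]; exact ⟨b1, b2, b3⟩)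
  rw [e2] at hB
  exact hA.trans hB

lemma cellLe_of_le {n : ℕ} {p q : ℕ × ℕ} (hp : Reg n p) (hq : Reg n q)
    (h : leB n (rho n p) (rho n q)) : q.1 ≤ p.1 ∧ p.2 ≤ q.2 := by
  obtain ⟨hT, hA⟩ := leB_TH h
  rw [rho_T hp, rho_T hq] at hT
  rw [rho_T hp, rho_T hq, rho_H hp, rho_H hq] at hA
  obtain ⟨a1, a2, a3⟩ := hp
  obtain ⟨b1, b2, b3⟩ := hq
  constructor <;> omega



/-- For every `n ≥ 1` and every `k`, order ideals of cardinality `k` in the root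
poset of type `B_n` are equinumerous with type `B_n` Dyck paths of area `k`. -/
theorem idealsB_eq_dyckB (n : ℕ) (hn : 1 ≤ n) (k : ℕ) :
    {I : Set (Fin n → ℤ) | IsIdealB n I ∧ I.ncard = k}.ncard =
      {w : Fin (2 * n) → Bool | IsDyckB n w ∧ areaB n w = k}.ncard := by
  classical
  set Θ : (Fin (2 * n) → Bool) → Set (Fin n → ℤ) :=
    fun w => rho n '' {p : ℕ × ℕ | Reg n p ∧ CellBelow w p.1 p.2} with hΘ
  have harea : ∀ w : Fin (2 * n) → Bool,
      areaB n w = {p : ℕ × ℕ | Reg n p ∧ CellBelow w p.1 p.2}.ncard := by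
    intro w
    rw [areaB]
    congr 1
    ext p
    simp only [Set.mem_setOf_eq, Reg]
    constructor
    · rintro ⟨h1, h2, h3, h4⟩
      exact ⟨⟨h1, h2, by omega⟩, h4⟩
    · rintro ⟨⟨h1, h2, h3⟩, h4⟩
      exact ⟨h1, h2, by omega, h4⟩
  have hncard : ∀ w : Fin (2 * n) → Bool, (Θ w).ncard = areaB n w := by
    intro w
    rw [harea, hΘ]
    exact Set.ncard_image_of_injOn (fun p hp q hq h => rho_inj hp.1 hq.1 h)
  have hSdown : ∀ w : Fin (2 * n) → Bool,
      Down n {p : ℕ × ℕ | Reg n p ∧ CellBelow w p.1 p.2} := by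
    intro w
    constructor
    · exact fun p hp => hp.1
    · rintro p q hreg ⟨hqreg, kk, hE, hN⟩ hq1 hq2
      exact ⟨hreg, kk, by omega, by omega⟩
  have hideal : ∀ w : Fin (2 * n) → Bool, IsIdealB n (Θ w) := by
    intro w
    constructor
    · rintro v ⟨p, hp, rfl⟩
      exact rho_mem hp.1
    · rintro a ⟨pa, hpa, rfl⟩ b hb hle
      obtain ⟨pb, hpbreg, rfl⟩ := rho_surj hb
      have hcl := cellLe_of_le hpbreg hpa.1 hle
      exact ⟨pb, (hSdown w).2 pb pa hpbreg hpa hcl.1 hcl.2, rfl⟩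
  have hsets : {I : Set (Fin n → ℤ) | IsIdealB n I ∧ I.ncard = k} =
      Θ '' {w : Fin (2 * n) → Bool | IsDyckB n w ∧ areaB n w = k} := by
    ext I
    constructor
    · rintro ⟨hI, hIk⟩
      set S : Set (ℕ × ℕ) := {p | Reg n p ∧ rho n p ∈ I} with hSdef
      have hS : Down n S := by
        constructor
        · exact fun p hp => hp.1
        · intro p q hreg hq h1 h2
          exact ⟨hreg, hI.2 (rho n q) hq.2 (rho n p) (rho_mem hreg)
            (le_of_cellLe hreg hq.1 h1 h2)⟩
      set w := Psi n S with hwdef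
      have hSw : {p : ℕ × ℕ | Reg n p ∧ CellBelow w p.1 p.2} = S := by
        ext p
        constructor
        · rintro ⟨hr, hcb⟩
          exact (cells_Psi hS hr).mp hcb
        · intro hp
          exact ⟨hp.1, (cells_Psi hS hp.1).mpr hp⟩
      have hThetaw : Θ w = I := by
        rw [hΘ]
        simp only
        rw [hSw]
        ext v
        constructor
        · rintro ⟨p, hp, rfl⟩
          exact hp.2
        · intro hv
          obtain ⟨p, hreg, rfl⟩ := rho_surj (hI.1 hv)
          exact ⟨p, ⟨hreg, hv⟩, rfl⟩
      refine ⟨w, ⟨dyck_Psi hS, ?_⟩, hThetaw⟩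
      have := hncard w
      rw [hThetaw] at this
      omega
    · rintro ⟨w, ⟨hw, hwk⟩, rfl⟩
      refine ⟨hideal w, ?_⟩
      rw [hncard w, hwk]
  rw [hsets]
  apply Set.ncard_image_of_injOn
  intro w hw w' hw' heq
  have hss : ∀ p : ℕ × ℕ, Reg n p → (CellBelow w p.1 p.2 ↔ CellBelow w' p.1 p.2) := by
    intro p hreg
    constructor
    · intro hcb
      have hmem : rho n p ∈ Θ w' := heq ▸ ⟨p, ⟨hreg, hcb⟩, rfl⟩
      obtain ⟨q, hq, heqr⟩ := hmem
      have := rho_inj hq.1 hreg heqr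
      subst this
      exact hq.2
    · intro hcb
      have hmem : rho n p ∈ Θ w := heq ▸ ⟨p, ⟨hreg, hcb⟩, rfl⟩
      obtain ⟨q, hq, heqr⟩ := hmem
      have := rho_inj hq.1 hreg heqr
      subst this
      exact hq.2
  exact cells_inj hw.1 hw'.1 hss


end Stmt
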